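/- Let $\varphi$ be a smooth real-valued function on $\mathbb{R}^3$ satisfying $X^2 \varphi = 0$, $Y^2 \varphi = 0$, and $XY\varphi + YX\varphi = 0$, where $X = \partial_x + 2y\,\partial_t$, $Y = \partial_y - 2x\,\partial_t$, $T = \partial_t$. Then $T\varphi$ is constant, and $\varphi(x,y,t) = \alpha + \lambda t + \mu x + \nu y$ for some real constants $\alpha, \lambda, \mu, \nu$. -/

import Mathlib

/-- The left-invariant vector field `X = ∂ₓ + 2y ∂ₜ` on `ℍ¹ ≅ ℝ³`,
with coordinates `p = (x, y, t)`. -/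
noncomputable def Xd (f : ℝ × ℝ × ℝ → ℝ) (p : ℝ × ℝ × ℝ) : ℝ :=
  fderiv ℝ f p (1, 0, 2 * p.2.1)

/-- The left-invariant vector field `Y = ∂_y - 2x ∂ₜ` on `ℍ¹ ≅ ℝ³`. -/
noncomputable def Yd (f : ℝ × ℝ × ℝ → ℝ) (p : ℝ × ℝ × ℝ) : ℝ :=
  fderiv ℝ f p (0, 1, -(2 * p.1))

/-- The vector field `T = ∂ₜ`. -/
noncomputable def Td (f : ℝ × ℝ × ℝ → ℝ) (p : ℝ × ℝ × ℝ) : ℝ :=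
  fderiv ℝ f p (0, 0, 1)

namespace H1Aux

abbrev E : Type := ℝ × ℝ × ℝ

/-- Projection to the `y` coordinate. -/
noncomputable def πy : E →L[ℝ] ℝ :=
  (ContinuousLinearMap.fst ℝ ℝ ℝ).comp (ContinuousLinearMap.snd ℝ ℝ (ℝ × ℝ))

/-- Projection to the `x` coordinate. -/
noncomputable def πx : E →L[ℝ] ℝ := ContinuousLinearMap.fst ℝ ℝ (ℝ × ℝ)

/-- Derivative of the `X` vector field. -/
noncomputable def LX : E →L[ℝ] E :=
  (0 : E →L[ℝ] ℝ).prod ((0 : E →L[ℝ] ℝ).prod ((2 : ℝ) • πy))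

/-- Derivative of the `Y` vector field. -/
noncomputable def LY : E →L[ℝ] E :=
  (0 : E →L[ℝ] ℝ).prod ((0 : E →L[ℝ] ℝ).prod ((-2 : ℝ) • πx))

@[simp] lemma LX_apply (v : E) : LX v = (0, 0, 2 * v.2.1) := rfl

@[simp] lemma LY_apply (v : E) : LY v = (0, 0, -(2 * v.1)) := by
  show ((0:ℝ), (0:ℝ), (-2:ℝ) * v.1) = (0, 0, -(2 * v.1))
  norm_num

/-- The `X` vector field as a map. -/
noncomputable def Xv (p : E) : E := (1, 0, 2 * p.2.1)

/-- The `Y` vector field as a map. -/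
noncomputable def Yv (p : E) : E := (0, 1, -(2 * p.1))

/-- The `T` direction. -/
noncomputable def Tv : E := (0, 0, 1)

lemma hasFDerivAt_Xv (p : E) : HasFDerivAt Xv LX p := by
  have h : Xv = fun q : E => ((1:ℝ), (0:ℝ), (0:ℝ)) + LX q := by
    funext q
    simp [Xv, LX_apply, Prod.ext_iff]
  rw [h]
  simpa [Pi.add_def] using (hasFDerivAt_const ((1:ℝ), (0:ℝ), (0:ℝ)) p).add LX.hasFDerivAt

lemma hasFDerivAt_Yv (p : E) : HasFDerivAt Yv LY p := by
  have h : Yv = fun q : E => ((0:ℝ), (1:ℝ), (0:ℝ)) + LY q := by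
    funext q
    simp [Yv, LY_apply, Prod.ext_iff]
  rw [h]
  simpa [Pi.add_def] using (hasFDerivAt_const ((0:ℝ), (1:ℝ), (0:ℝ)) p).add LY.hasFDerivAt

end H1Aux

set_option maxHeartbeats 2000000

open H1Aux in
theorem harmonic_type_system_on_H1 (φ : ℝ × ℝ × ℝ → ℝ) (hφ : ContDiff ℝ (⊤ : ℕ∞) φ)
    (hXX : ∀ p, Xd (Xd φ) p = 0) (hYY : ∀ p, Yd (Yd φ) p = 0)
    (hXY : ∀ p, Xd (Yd φ) p + Yd (Xd φ) p = 0) :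
    (∀ p q, Td φ p = Td φ q) ∧
    ∃ α lam μ ν : ℝ, ∀ p : ℝ × ℝ × ℝ,
      φ p = α + lam * p.2.2 + μ * p.1 + ν * p.2.1 := by
  set f1 := fderiv ℝ φ with hf1def
  set f2 := fderiv ℝ f1 with hf2def
  set f3 := fderiv ℝ f2 with hf3def
  have hc3 : ContDiff ℝ 3 φ := hφ.of_le (WithTop.coe_le_coe.mpr le_top)
  have hc2 : ContDiff ℝ 2 f1 := hc3.fderiv_right (by norm_num)
  have hc1 : ContDiff ℝ 1 f2 := hc2.fderiv_right (by norm_num)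
  have hd1 : Differentiable ℝ φ := hc3.differentiable (by norm_num)
  have hd2 : Differentiable ℝ f1 := hc2.differentiable (by norm_num)
  have hd3 : Differentiable ℝ f2 := hc1.differentiable (by norm_num)
  have hf1 : ∀ p, HasFDerivAt φ (f1 p) p := fun p => (hd1 p).hasFDerivAt
  have hf2 : ∀ p, HasFDerivAt f1 (f2 p) p := fun p => (hd2 p).hasFDerivAt
  have hf3 : ∀ p, HasFDerivAt f2 (f3 p) p := fun p => (hd3 p).hasFDerivAt
  -- symmetry of the second derivative
  have sym2 : ∀ p v w, f2 p v w = f2 p w v := fun p =>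
    second_derivative_symmetric hf1 (hf2 p)
  -- symmetry of the third derivative in the first two slots
  have sym3a : ∀ p (u v w : E), f3 p u v w = f3 p v u w := by
    intro p u v w
    rw [second_derivative_symmetric hf2 (hf3 p) u v]
  -- symmetry of the third derivative in the last two slots
  have sym3b : ∀ p (u v w : E), f3 p u v w = f3 p u w v := by
    intro p u v w
    have Hvw := ((hf3 p).clm_apply (hasFDerivAt_const v p)).clm_apply
      (hasFDerivAt_const w p)
    have Hwv := ((hf3 p).clm_apply (hasFDerivAt_const w p)).clm_apply
      (hasFDerivAt_const v p)
    have heq : (fun y => f2 y v w) = (fun y => f2 y w v) := funext fun y => sym2 y v w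
    rw [heq] at Hvw
    have := Hvw.unique Hwv
    have h2 := congrFun (congrArg DFunLike.coe this) u
    simpa using h2
  -- first-order consequences of the hypotheses
  have hXdD : ∀ p, HasFDerivAt (Xd φ) ((f1 p).comp LX + (f2 p).flip (Xv p)) p := by
    intro p
    exact (hf2 p).clm_apply (hasFDerivAt_Xv p)
  have hYdD : ∀ p, HasFDerivAt (Yd φ) ((f1 p).comp LY + (f2 p).flip (Yv p)) p := by
    intro p
    exact (hf2 p).clm_apply (hasFDerivAt_Yv p)
  have eXX : ∀ p, f2 p (Xv p) (Xv p) = 0 := by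
    intro p
    have h := hXX p
    rw [Xd, (hXdD p).fderiv] at h
    simpa [Xv, show ((0:ℝ), (0:ℝ), (0:ℝ)) = 0 from rfl] using h
  have eYY : ∀ p, f2 p (Yv p) (Yv p) = 0 := by
    intro p
    have h := hYY p
    rw [Yd, (hYdD p).fderiv] at h
    simpa [Yv, show ((0:ℝ), (0:ℝ), (0:ℝ)) = 0 from rfl] using h
  have eXY : ∀ p, f2 p (Xv p) (Yv p) = 0 := by
    intro p
    have h := hXY p
    rw [Xd, Yd, (hXdD p).fderiv, (hYdD p).fderiv] at h
    have h' : f1 p (LY (Xv p)) + f2 p (Xv p) (Yv p)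
        + (f1 p (LX (Yv p)) + f2 p (Yv p) (Xv p)) = 0 := by
      simpa [Xv, Yv] using h
    have hneg : LY (Xv p) = -(LX (Yv p)) := by
      simp [Xv, Yv, Prod.ext_iff]
    rw [hneg, map_neg] at h'
    have hsym := sym2 p (Xv p) (Yv p)
    linarith [h']
  -- second-order consequences: differentiate the above identities
  have D2X : ∀ p, HasFDerivAt (fun y => f2 y (Xv y)) ((f2 p).comp LX + (f3 p).flip (Xv p)) p :=
    fun p => (hf3 p).clm_apply (hasFDerivAt_Xv p)
  have D2Y : ∀ p, HasFDerivAt (fun y => f2 y (Yv y)) ((f2 p).comp LY + (f3 p).flip (Yv p)) p :=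
    fun p => (hf3 p).clm_apply (hasFDerivAt_Yv p)
  have EXX : ∀ p v, f2 p (Xv p) (LX v) + (f2 p (LX v) (Xv p) + f3 p v (Xv p) (Xv p)) = 0 := by
    intro p v
    have H := (D2X p).clm_apply (hasFDerivAt_Xv p)
    have H0 : HasFDerivAt (fun y => f2 y (Xv y) (Xv y)) (0 : E →L[ℝ] ℝ) p := by
      have : (fun y => f2 y (Xv y) (Xv y)) = fun _ => (0:ℝ) := funext fun y => eXX y
      rw [this]; exact hasFDerivAt_const 0 p
    have hu := H.unique H0
    have h2 := congrFun (congrArg DFunLike.coe hu) v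
    simpa using h2
  have EYY : ∀ p v, f2 p (Yv p) (LY v) + (f2 p (LY v) (Yv p) + f3 p v (Yv p) (Yv p)) = 0 := by
    intro p v
    have H := (D2Y p).clm_apply (hasFDerivAt_Yv p)
    have H0 : HasFDerivAt (fun y => f2 y (Yv y) (Yv y)) (0 : E →L[ℝ] ℝ) p := by
      have : (fun y => f2 y (Yv y) (Yv y)) = fun _ => (0:ℝ) := funext fun y => eYY y
      rw [this]; exact hasFDerivAt_const 0 p
    have hu := H.unique H0
    have h2 := congrFun (congrArg DFunLike.coe hu) v
    simpa using h2
  have EXY : ∀ p v, f2 p (Xv p) (LY v) + (f2 p (LX v) (Yv p) + f3 p v (Xv p) (Yv p)) = 0 := by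
    intro p v
    have H := (D2X p).clm_apply (hasFDerivAt_Yv p)
    have H0 : HasFDerivAt (fun y => f2 y (Xv y) (Yv y)) (0 : E →L[ℝ] ℝ) p := by
      have : (fun y => f2 y (Xv y) (Yv y)) = fun _ => (0:ℝ) := funext fun y => eXY y
      rw [this]; exact hasFDerivAt_const 0 p
    have hu := H.unique H0
    have h2 := congrFun (congrArg DFunLike.coe hu) v
    simpa using h2
  -- f2 p (Xv p) Tv = 0
  have hXT : ∀ p, f2 p (Xv p) Tv = 0 := by
    intro p
    have h1 := EXX p (Yv p)
    have h2 := EXY p (Xv p)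
    have e1 : LX (Yv p) = (2:ℝ) • Tv := by
      simp [Yv, Tv, Prod.ext_iff]
    have e2 : LY (Xv p) = (-2:ℝ) • Tv := by
      simp [Xv, Tv, Prod.ext_iff]
    have e3 : LX (Xv p) = 0 := by
      simp [Xv, Prod.ext_iff]
    rw [e1] at h1
    rw [e2, e3] at h2
    simp only [map_smul, ContinuousLinearMap.smul_apply, smul_eq_mul, map_zero,
      ContinuousLinearMap.zero_apply] at h1 h2
    have s1 : f3 p (Yv p) (Xv p) (Xv p) = f3 p (Xv p) (Xv p) (Yv p) := by
      rw [sym3a, sym3b]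
    have s2 := sym2 p (Xv p) Tv
    have s3 := sym2 p Tv (Xv p)
    linarith
  have hYT : ∀ p, f2 p (Yv p) Tv = 0 := by
    intro p
    have h1 := EYY p (Xv p)
    have h2 := EXY p (Yv p)
    have e1 : LY (Xv p) = (-2:ℝ) • Tv := by
      simp [Xv, Tv, Prod.ext_iff]
    have e2 : LX (Yv p) = (2:ℝ) • Tv := by
      simp [Yv, Tv, Prod.ext_iff]
    have e3 : LY (Yv p) = 0 := by
      simp [Yv, Prod.ext_iff]
    rw [e1] at h1
    rw [e2, e3] at h2
    simp only [map_smul, ContinuousLinearMap.smul_apply, smul_eq_mul, map_zero,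
      ContinuousLinearMap.zero_apply] at h1 h2
    have s1 : f3 p (Xv p) (Yv p) (Yv p) = f3 p (Yv p) (Xv p) (Yv p) := by
      rw [sym3a]
    have s2 := sym2 p (Yv p) Tv
    linarith
  -- differentiate those to get `f2 p Tv Tv = 0`
  have EXT : ∀ p v, f2 p (LX v) Tv + f3 p v (Xv p) Tv = 0 := by
    intro p v
    have H := (D2X p).clm_apply (hasFDerivAt_const Tv p)
    have H0 : HasFDerivAt (fun y => f2 y (Xv y) Tv) (0 : E →L[ℝ] ℝ) p := by
      have : (fun y => f2 y (Xv y) Tv) = fun _ => (0:ℝ) := funext fun y => hXT y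
      rw [this]; exact hasFDerivAt_const 0 p
    have hu := H.unique H0
    have h2 := congrFun (congrArg DFunLike.coe hu) v
    simpa using h2
  have EYT : ∀ p v, f2 p (LY v) Tv + f3 p v (Yv p) Tv = 0 := by
    intro p v
    have H := (D2Y p).clm_apply (hasFDerivAt_const Tv p)
    have H0 : HasFDerivAt (fun y => f2 y (Yv y) Tv) (0 : E →L[ℝ] ℝ) p := by
      have : (fun y => f2 y (Yv y) Tv) = fun _ => (0:ℝ) := funext fun y => hYT y
      rw [this]; exact hasFDerivAt_const 0 p
    have hu := H.unique H0
    have h2 := congrFun (congrArg DFunLike.coe hu) v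
    simpa using h2
  have hTT : ∀ p, f2 p Tv Tv = 0 := by
    intro p
    have h1 := EXT p (Yv p)
    have h2 := EYT p (Xv p)
    have e1 : LX (Yv p) = (2:ℝ) • Tv := by
      simp [Yv, Tv, Prod.ext_iff]
    have e2 : LY (Xv p) = (-2:ℝ) • Tv := by
      simp [Xv, Tv, Prod.ext_iff]
    rw [e1] at h1
    rw [e2] at h2
    simp only [map_smul, ContinuousLinearMap.smul_apply, smul_eq_mul] at h1 h2
    have s1 : f3 p (Yv p) (Xv p) Tv = f3 p (Xv p) (Yv p) Tv := by
      rw [sym3a]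
    linarith
  -- hence the full second derivative vanishes
  have hf2zero : ∀ p, f2 p = 0 := by
    intro p
    refine ContinuousLinearMap.ext fun v => ContinuousLinearMap.ext fun w => ?_
    have h21 : f2 p (Yv p) (Xv p) = 0 := by rw [sym2]; exact eXY p
    have h31 : f2 p Tv (Xv p) = 0 := by rw [sym2]; exact hXT p
    have h32 : f2 p Tv (Yv p) = 0 := by rw [sym2]; exact hYT p
    have hv : v = v.1 • Xv p + v.2.1 • Yv p
        + (v.2.2 - 2*p.2.1*v.1 + 2*p.1*v.2.1) • Tv := by
      refine Prod.ext ?_ (Prod.ext ?_ ?_) <;> simp [Xv, Yv, Tv] <;> ring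
    have hw : w = w.1 • Xv p + w.2.1 • Yv p
        + (w.2.2 - 2*p.2.1*w.1 + 2*p.1*w.2.1) • Tv := by
      refine Prod.ext ?_ (Prod.ext ?_ ?_) <;> simp [Xv, Yv, Tv] <;> ring
    show f2 p v w = 0
    rw [hv, hw]
    simp [map_add, map_smul, ContinuousLinearMap.add_apply,
      ContinuousLinearMap.smul_apply, smul_eq_mul, eXX p, eYY p, eXY p, h21,
      hXT p, hYT p, hTT p, h31, h32]
  -- so the first derivative is a constant linear map
  have hconst : ∀ p, f1 p = f1 0 := fun p =>
    is_const_of_fderiv_eq_zero hd2 hf2zero p 0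
  set C := f1 0 with hCdef
  have hTd : ∀ p q, Td φ p = Td φ q := by
    intro p q
    simp only [Td]
    rw [← hf1def, hconst p, hconst q]
  refine ⟨hTd, φ 0, C (0, 0, 1), C (1, 0, 0), C (0, 1, 0), ?_⟩
  have hg : ∀ p : E, HasFDerivAt (fun q => φ q - C q) (0 : E →L[ℝ] ℝ) p := by
    intro p
    have h := (hf1 p).sub C.hasFDerivAt
    rwa [hconst p, sub_self] at h
  have hgd : Differentiable ℝ (fun q : E => φ q - C q) := fun p => (hg p).differentiableAt
  have hgconst : ∀ p : E, φ p - C p = φ 0 - C 0 := fun p =>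
    is_const_of_fderiv_eq_zero hgd (fun x => (hg x).fderiv) p 0
  intro p
  have h0 : C (0 : E) = 0 := map_zero C
  have hthis := hgconst p
  rw [h0, sub_zero] at hthis
  have hp : (p : E) = p.1 • ((1:ℝ), (0:ℝ), (0:ℝ)) + p.2.1 • ((0:ℝ), (1:ℝ), (0:ℝ))
      + p.2.2 • ((0:ℝ), (0:ℝ), (1:ℝ)) := by
    refine Prod.ext ?_ (Prod.ext ?_ ?_) <;> simp
  have hCp : C p = p.1 * C (1, 0, 0) + p.2.1 * C (0, 1, 0) + p.2.2 * C (0, 0, 1) := by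
    conv_lhs => rw [hp]
    simp only [map_add, map_smul, smul_eq_mul]
  linear_combination hthis + hCp
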